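/- With g: [0,1]² → [0,1]² as defined (sieving map with central part of relative length p sent to s₂ = (1/2,1) and outer parts stretched linearly to the level q(p) = p/(1+p)), the set K₂ = {(x,p) : ∀n, g^n(x,p) ≠ s₂} has Hausdorff dimension 2. -/

import Mathlib

/-!
Code a point by a binary sequence `ω` and the parameter `p`: `X(ω, p) = ∑ ωₖ aₖ(p)`, where `aₖ(p)`
is the offset of the right half of a rank-`k` cylinder of the sieve. In these coordinates `g` is
the shift on `ω` together with `p ↦ p / (1 + p)`, so when `ω` is not eventually constant the orbit
of `(X(ω, p), p)` never meets `s₂`: its parameters `p / (1 + n p)` stay below `1`.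
Two codes that first differ at digit `n` are mapped at least `≈ 2⁻ⁿ / n²` apart, while `X` is
Lipschitz in `p`. Hence on irrational `t ∈ [0, 1)` and `p ∈ [1/2, 3/4]` the inverse of
`(t, p) ↦ (X(digits t, p), p)` is `r`-Hölder for every `r < 1`, and a set of dimension `2` is
mapped into `K₂`, losing at most the factor `r` in dimension.
-/

open Filter MeasureTheory

/-- The sieving map `g` on the unit square `Y = [0,1] × [0,1]`. -/
noncomputable def g : ℝ × ℝ → ℝ × ℝ := fun z =>
  let x := z.1
  let p := z.2
  if p = 1 then (1 / 2, 1)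
  else if x < (1 - p) / 2 then (2 * x / (1 - p), p / (1 + p))
  else if x ≤ (1 + p) / 2 then (1 / 2, 1)
  else (2 * (x - (1 + p) / 2) / (1 - p), p / (1 + p))

open Set
open scoped ENNReal NNReal Topology

theorem le_dimH_image_of_dist_le_mul_rpow {X Y : Type*} [MetricSpace X] [MetricSpace Y]
    {f : X → Y} {s : Set X} {C : ℝ} {r : ℝ≥0} (hr : 0 < r)
    (h : ∀ x ∈ s, ∀ y ∈ s, dist x y ≤ C * dist (f x) (f y) ^ (r : ℝ)) :
    (r : ℝ≥0∞) * dimH s ≤ dimH (f '' s) := by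
  rcases s.eq_empty_or_nonempty with rfl | ⟨x₀, -⟩
  · simp
  have : Nonempty X := ⟨x₀⟩
  have hr' : (r : ℝ) ≠ 0 := NNReal.coe_ne_zero.2 hr.ne'
  have hinj : InjOn f s := fun x hx y hy hxy =>
    dist_le_zero.1 (by simpa [hxy, Real.zero_rpow hr'] using h x hx y hy)
  have hinv := hinj.leftInvOn_invFunOn
  have hholder : HolderOnWith C.toNNReal r (Function.invFunOn f s) (f '' s) := by
    rintro _ ⟨x, hx, rfl⟩ _ ⟨y, hy, rfl⟩
    rw [hinv hx, hinv hy, edist_dist, edist_dist,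
      ENNReal.ofReal_rpow_of_nonneg dist_nonneg r.coe_nonneg]
    exact (ENNReal.ofReal_le_ofReal (h x hx y hy)).trans_eq (ENNReal.ofReal_mul' (by positivity))
  have := hholder.dimH_image_le hr
  rw [hinv.image_image] at this
  exact ENNReal.mul_le_of_le_div' this

theorem two_le_dimH_diff_prod {S : Set ℝ} (hS : S.Countable) {a b c d : ℝ} (hab : a < b)
    (hcd : c < d) : 2 ≤ dimH ((Ico a b \ S) ×ˢ Icc c d) := by
  have hcover : Icc a b ×ˢ Icc c d ⊆
      (Ico a b \ S) ×ˢ Icc c d ∪ ⋃ x ∈ insert b S, ({x} : Set ℝ) ×ˢ Icc c d := by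
    rintro ⟨x, y⟩ ⟨hx, hy⟩
    by_cases hxS : x ∈ insert b S
    · exact Or.inr (mem_biUnion hxS ⟨rfl, hy⟩)
    · exact Or.inl ⟨⟨⟨hx.1, lt_of_le_of_ne hx.2 fun h => hxS (h ▸ mem_insert _ _)⟩,
        fun h => hxS (mem_insert_of_mem _ h)⟩, hy⟩
  have hlines : dimH (⋃ x ∈ insert b S, ({x} : Set ℝ) ×ˢ Icc c d) ≤ 1 := by
    rw [dimH_bUnion (hS.insert b)]
    refine iSup₂_le fun x _ => ?_
    rw [singleton_prod]
    exact ((LipschitzWith.prodMk_left x).dimH_image_le _).trans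
      ((dimH_mono (subset_univ _)).trans_eq Real.dimH_univ)
  have hrect : dimH (Icc a b ×ˢ Icc c d) = 2 := by
    rw [Real.dimH_of_nonempty_interior, Module.finrank_prod, Module.finrank_self]
    · norm_num
    rw [interior_prod_eq, interior_Icc, interior_Icc]
    exact (nonempty_Ioo.2 hab).prod (nonempty_Ioo.2 hcd)
  have := hrect ▸ (dimH_mono hcover).trans_eq (dimH_union _ _)
  rcases le_max_iff.1 this with h | h
  · exact h
  · exact absurd (h.trans hlines) (by norm_num)

/-- The polynomial factor is absorbed by `2^(-(1 - r) n)`. -/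
theorem exists_inv_two_pow_le_mul_rpow {r : ℝ} (hr0 : 0 < r) (hr1 : r < 1) {K : ℝ}
    (hK : 1 ≤ K) : ∃ C, ∀ (n : ℕ) {d : ℝ}, 0 ≤ d → (2 ^ n)⁻¹ ≤ K * (n + 1) ^ 2 * d →
      (2 ^ n)⁻¹ ≤ C * d ^ r := by
  set θ : ℝ := 2⁻¹ ^ (1 - r)
  have hθ0 : 0 < θ := by positivity
  have hθ1 : θ < 1 := Real.rpow_lt_one (by norm_num) (by norm_num) (by linarith)
  obtain ⟨M, hM⟩ : BddAbove (range fun n : ℕ => ((n + 1 : ℕ) : ℝ) ^ 2 * θ ^ (n + 1)) :=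
    ((tendsto_pow_const_mul_const_pow_of_abs_lt_one 2 (by rwa [abs_of_pos hθ0])).comp
      (tendsto_add_atTop_nat 1)).bddAbove_range
  refine ⟨K * (M / θ), fun n d hd h => ?_⟩
  have hMn : ((n : ℝ) + 1) ^ 2 * θ ^ n ≤ M / θ := by
    rw [le_div_iff₀ hθ0]
    simpa [pow_succ, mul_assoc] using hM (mem_range_self n)
  have hθn : ((2 : ℝ) ^ n)⁻¹ ^ (1 - r) = θ ^ n := by
    rw [← inv_pow, Real.rpow_pow_comm (by norm_num)]
  have hKn : 1 ≤ K * ((n : ℝ) + 1) ^ 2 := by nlinarith [n.cast_nonneg (α := ℝ)]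
  calc ((2 : ℝ) ^ n)⁻¹ = ((2 ^ n)⁻¹ ^ r) * ((2 ^ n)⁻¹ ^ (1 - r)) := by
        rw [← Real.rpow_add (by positivity), add_sub_cancel, Real.rpow_one]
    _ ≤ (K * (n + 1) ^ 2 * d) ^ r * θ ^ n := by
        rw [hθn]; gcongr
    _ = (K * (n + 1) ^ 2) ^ r * θ ^ n * d ^ r := by
        rw [Real.mul_rpow (by positivity) hd]; ring
    _ ≤ K * ((n + 1) ^ 2 * θ ^ n) * d ^ r := by
        rw [← mul_assoc]; gcongr; exact Real.rpow_le_self_of_one_le hKn hr1.le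
    _ ≤ K * (M / θ) * d ^ r := by gcongr

theorem fin_two_cast_eq_zero_or_one (i : Fin 2) : (i : ℝ) = 0 ∨ (i : ℝ) = 1 := by
  fin_cases i <;> simp

theorem fin_two_cast_le_one (i : Fin 2) : (i : ℝ) ≤ 1 := by
  rcases fin_two_cast_eq_zero_or_one i with h | h <;> simp [h]

namespace Real

theorem ofDigits_const_fin_two (j : Fin 2) : ofDigits (fun _ : ℕ => j) = j := by
  fin_cases j
  · simp [ofDigits, ofDigitsTerm]
  · simpa using ofDigits_const_last_eq_one 1

theorem ofDigits_mem_range_ratCast_of_forall_ne {ω : ℕ → Fin 2} {n : ℕ} {i : Fin 2}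
    (h : ∀ k, ω (k + n) ≠ i) : ofDigits ω ∈ range ((↑) : ℚ → ℝ) := by
  have htail : (fun k => ω (k + n)) = fun _ => i.rev := funext fun k => by
    have := h k
    rw [Fin.ext_iff, Fin.val_rev] at *
    omega
  rw [ofDigits_eq_sum_add_ofDigits ω n, htail, ofDigits_const_fin_two]
  refine ⟨∑ k ∈ Finset.range n, (ω k : ℚ) * ((2 : ℚ) ^ (k + 1))⁻¹ + ((2 : ℚ) ^ n)⁻¹ * i.rev, ?_⟩
  push_cast [ofDigitsTerm]
  rfl

theorem abs_sub_le_of_forall_lt_digits_eq {t t' : ℝ} (ht : t ∈ Ico 0 1) (ht' : t' ∈ Ico 0 1) {n : ℕ}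
    (hagree : ∀ k < n, digits t 2 k = digits t' 2 k) : |t - t'| ≤ (2 ^ n)⁻¹ := by
  rw [← ofDigits_digits one_lt_two ht, ← ofDigits_digits one_lt_two ht']
  exact_mod_cast abs_ofDigits_sub_ofDigits_le hagree

theorem exists_digits_eq_of_irrational {t : ℝ} (ht : t ∈ Ico 0 1) (hirr : Irrational t)
    (i : Fin 2) (n : ℕ) : ∃ k, digits t 2 (k + n) = i := by
  by_contra! h
  exact hirr (ofDigits_digits one_lt_two ht ▸ ofDigits_mem_range_ratCast_of_forall_ne h)

end Real

namespace Sieving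

/-- The second coordinate of `gⁿ (x, p)` along a surviving orbit: `n` iterates of `p ↦ p/(1+p)`. -/
noncomputable def levelParam (n : ℕ) (p : ℝ) : ℝ := p / (1 + n * p)

/-- `∏_{j<k} (1 - levelParam j p) / 2` after telescoping: the common length of the `2^k` rank-`k`
cylinders, the intervals of `x` whose first `k` iterates under `g` stay on its linear branches. -/
noncomputable def cylinderLength (k : ℕ) (p : ℝ) : ℝ := (1 - p) / (2 ^ k * (1 + (k - 1) * p))

/-- The offset of the right rank-`(k+1)` cylinder inside a rank-`k` one. -/
noncomputable def digitWeight (k : ℕ) (p : ℝ) : ℝ := cylinderLength k p - cylinderLength (k + 1) p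

noncomputable def codedPoint (ω : ℕ → Fin 2) (p : ℝ) : ℝ := ∑' k, (ω k : ℝ) * digitWeight k p

section Basic

variable {p : ℝ}

theorem levelParam_succ (hp : 0 ≤ p) (n : ℕ) :
    levelParam (n + 1) p = levelParam n (p / (1 + p)) := by
  have : 0 < 1 + p := by linarith
  have : 0 < 1 + (n + 1) * p := by positivity
  unfold levelParam
  field_simp
  push_cast
  ring

theorem levelParam_lt_one (hp0 : 0 ≤ p) (hp1 : p < 1) (n : ℕ) : levelParam n p < 1 :=
  (div_le_self hp0 (by nlinarith [n.cast_nonneg (α := ℝ)])).trans_lt hp1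

theorem div_one_add_mem_Ioo (hp0 : 0 < p) (hp1 : p < 1) : p / (1 + p) ∈ Ioo 0 1 :=
  ⟨by positivity, (div_lt_one (by positivity)).2 (by linarith)⟩

theorem cylinderLength_zero (hp : p ≠ 1) : cylinderLength 0 p = 1 := by
  simp only [cylinderLength, pow_zero, Nat.cast_zero, one_mul, zero_sub, neg_one_mul,
    ← sub_eq_add_neg]
  exact div_self (sub_ne_zero.2 hp.symm)

theorem two_mul_cylinderLength_succ (k : ℕ) :
    2 * cylinderLength (k + 1) p = (1 - p) / (2 ^ k * (1 + k * p)) := by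
  simp only [cylinderLength, Nat.cast_succ, add_sub_cancel_right]
  rw [pow_succ, mul_comm _ (2 : ℝ), mul_assoc, ← mul_div_assoc,
    mul_div_mul_left _ _ two_ne_zero]

theorem digitWeight_zero (hp : p ≠ 1) : digitWeight 0 p = (1 + p) / 2 := by
  rw [digitWeight, cylinderLength_zero hp, cylinderLength]
  norm_num
  ring

end Basic

section CylinderLength

variable {p : ℝ} (hp0 : 0 < p) (hp1 : p < 1)
include hp0 hp1

theorem one_add_sub_one_mul_pos (k : ℕ) : 0 < 1 + ((k : ℝ) - 1) * p := by
  nlinarith [mul_nonneg k.cast_nonneg hp0.le]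

theorem cylinderLength_pos (k : ℕ) : 0 < cylinderLength k p :=
  div_pos (by linarith) (mul_pos (by positivity) (one_add_sub_one_mul_pos hp0 hp1 k))

theorem two_mul_cylinderLength_succ_lt (k : ℕ) :
    2 * cylinderLength (k + 1) p < cylinderLength k p := by
  rw [two_mul_cylinderLength_succ, cylinderLength]
  have := one_add_sub_one_mul_pos hp0 hp1 k
  exact div_lt_div_of_pos_left (by linarith) (by positivity)
    (mul_lt_mul_of_pos_left (by linarith) (by positivity))

theorem cylinderLength_succ (k : ℕ) :
    cylinderLength (k + 1) p = (1 - p) / 2 * cylinderLength k (p / (1 + p)) := by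
  have : 0 < 1 + p := by linarith
  have : 1 + k * p ≠ 0 := by positivity
  have : 1 + ((k : ℝ) - 1) * (p / (1 + p)) = (1 + k * p) / (1 + p) := by
    field_simp
    ring
  simp only [cylinderLength, this, Nat.cast_succ, add_sub_cancel_right]
  field_simp
  ring

theorem tendsto_cylinderLength : Tendsto (cylinderLength · p) atTop (𝓝 0) := by
  refine squeeze_zero (fun k => (cylinderLength_pos hp0 hp1 k).le) (fun k => ?_)
    (tendsto_pow_atTop_nhds_zero_of_lt_one (by norm_num : (0 : ℝ) ≤ 2⁻¹) (by norm_num))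
  have := one_add_sub_one_mul_pos hp0 hp1 k
  rw [cylinderLength, div_le_iff₀ (by positivity), inv_pow,
    inv_mul_cancel_left₀ (by positivity)]
  nlinarith [mul_nonneg k.cast_nonneg hp0.le]

theorem digitWeight_pos (k : ℕ) : 0 < digitWeight k p := by
  have := two_mul_cylinderLength_succ_lt hp0 hp1 k
  have := cylinderLength_pos hp0 hp1 (k + 1)
  rw [digitWeight]
  linarith

theorem digitWeight_succ (k : ℕ) :
    digitWeight (k + 1) p = (1 - p) / 2 * digitWeight k (p / (1 + p)) := by
  rw [digitWeight, digitWeight, cylinderLength_succ hp0 hp1, cylinderLength_succ hp0 hp1, mul_sub]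

theorem hasSum_digitWeight : HasSum (digitWeight · p) 1 := by
  refine (hasSum_iff_tendsto_nat_of_nonneg (fun k => (digitWeight_pos hp0 hp1 k).le) 1).2 ?_
  simp only [digitWeight, Finset.sum_range_sub', cylinderLength_zero hp1.ne]
  simpa using (tendsto_cylinderLength hp0 hp1).const_sub 1

end CylinderLength

section CodedPoint

variable {p : ℝ} (hp0 : 0 < p) (hp1 : p < 1) (ω : ℕ → Fin 2)
include hp0 hp1

theorem digit_mul_digitWeight_le (k : ℕ) : (ω k : ℝ) * digitWeight k p ≤ digitWeight k p :=
  mul_le_of_le_one_left (digitWeight_pos hp0 hp1 k).le (fin_two_cast_le_one _)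

theorem digit_mul_digitWeight_nonneg (k : ℕ) : 0 ≤ (ω k : ℝ) * digitWeight k p :=
  mul_nonneg (Nat.cast_nonneg _) (digitWeight_pos hp0 hp1 k).le

theorem summable_digit_mul_digitWeight : Summable fun k => (ω k : ℝ) * digitWeight k p :=
  .of_nonneg_of_le (digit_mul_digitWeight_nonneg hp0 hp1 ω)
    (digit_mul_digitWeight_le hp0 hp1 ω) (hasSum_digitWeight hp0 hp1).summable

theorem codedPoint_nonneg : 0 ≤ codedPoint ω p :=
  tsum_nonneg (digit_mul_digitWeight_nonneg hp0 hp1 ω)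

theorem codedPoint_le_one : codedPoint ω p ≤ 1 :=
  hasSum_le (digit_mul_digitWeight_le hp0 hp1 ω)
    (summable_digit_mul_digitWeight hp0 hp1 ω).hasSum (hasSum_digitWeight hp0 hp1)

theorem codedPoint_pos {k : ℕ} (hk : ω k = 1) : 0 < codedPoint ω p :=
  (summable_digit_mul_digitWeight hp0 hp1 ω).tsum_pos (digit_mul_digitWeight_nonneg hp0 hp1 ω) k
    (by simpa [hk] using digitWeight_pos hp0 hp1 k)

theorem codedPoint_lt_one {k : ℕ} (hk : ω k = 0) : codedPoint ω p < 1 :=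
  hasSum_lt (i := k) (digit_mul_digitWeight_le hp0 hp1 ω)
    (by simpa [hk] using digitWeight_pos hp0 hp1 k)
    (summable_digit_mul_digitWeight hp0 hp1 ω).hasSum (hasSum_digitWeight hp0 hp1)

theorem codedPoint_eq_head_add_tail :
    codedPoint ω p = (ω 0 : ℝ) * ((1 + p) / 2) +
      (1 - p) / 2 * codedPoint (fun k => ω (k + 1)) (p / (1 + p)) := by
  rw [codedPoint, (summable_digit_mul_digitWeight hp0 hp1 ω).tsum_eq_zero_add,
    digitWeight_zero hp1.ne, codedPoint, ← tsum_mul_left]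
  congr 1
  refine tsum_congr fun k => ?_
  rw [digitWeight_succ hp0 hp1]
  ring

end CodedPoint

section Dynamics

variable {p : ℝ} (hp0 : 0 < p) (hp1 : p < 1) {ω : ℕ → Fin 2}
include hp0 hp1

theorem g_codedPoint (h0 : ∃ k, ω (k + 1) = 0) (h1 : ∃ k, ω (k + 1) = 1) :
    g (codedPoint ω p, p) = (codedPoint (fun k => ω (k + 1)) (p / (1 + p)), p / (1 + p)) := by
  obtain ⟨hq0, hq1⟩ := div_one_add_mem_Ioo hp0 hp1
  obtain ⟨k₀, hk₀⟩ := h0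
  obtain ⟨k₁, hk₁⟩ := h1
  have hpos := codedPoint_pos hq0 hq1 (fun k => ω (k + 1)) hk₁
  have hlt := codedPoint_lt_one hq0 hq1 (fun k => ω (k + 1)) hk₀
  have hrec := codedPoint_eq_head_add_tail hp0 hp1 ω
  have h1p : 1 - p ≠ 0 := sub_ne_zero.2 hp1.ne'
  simp only [g, if_neg hp1.ne]
  rcases fin_two_cast_eq_zero_or_one (ω 0) with h | h <;> rw [h] at hrec
  · have hx : codedPoint ω p < (1 - p) / 2 := by rw [hrec]; nlinarith
    rw [if_pos hx, hrec]
    congr 1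
    field_simp
    ring
  · have hx : (1 + p) / 2 < codedPoint ω p := by rw [hrec]; nlinarith
    rw [if_neg (by linarith), if_neg (not_le.2 hx), hrec]
    congr 1
    field_simp
    ring

theorem g_iterate_codedPoint (hω : ∀ i n, ∃ k, ω (k + n) = i) (n : ℕ) :
    g^[n] (codedPoint ω p, p) =
      (codedPoint (fun k => ω (k + n)) (levelParam n p), levelParam n p) := by
  induction n generalizing p ω with
  | zero => simp [levelParam]
  | succ n ih =>
    obtain ⟨hq0, hq1⟩ := div_one_add_mem_Ioo hp0 hp1
    have hω' : ∀ i m, ∃ k, ω (k + m + 1) = i := fun i m => by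
      simpa only [add_assoc] using hω i (m + 1)
    rw [Function.iterate_succ_apply, g_codedPoint hp0 hp1 (hω 0 1) (hω 1 1), ih hq0 hq1 hω',
      levelParam_succ hp0.le]
    simp only [add_assoc]

end Dynamics

theorem cylinderLength_mul_levelParam_le_sub_codedPoint {n : ℕ} {p : ℝ} {ω ω' : ℕ → Fin 2}
    (hp0 : 0 < p) (hp1 : p < 1) (hagree : ∀ k < n, ω k = ω' k) (h0 : ω n = 0) (h1 : ω' n = 1) :
    cylinderLength n p * levelParam n p ≤ codedPoint ω' p - codedPoint ω p := by
  induction n generalizing p ω ω' with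
  | zero =>
    obtain ⟨hq0, hq1⟩ := div_one_add_mem_Ioo hp0 hp1
    have hY' := codedPoint_nonneg hq0 hq1 fun k => ω' (k + 1)
    have hY := codedPoint_le_one hq0 hq1 fun k => ω (k + 1)
    have : (1 - p) / 2 * (-1) ≤ (1 - p) / 2 * (codedPoint (fun k => ω' (k + 1)) (p / (1 + p)) -
        codedPoint (fun k => ω (k + 1)) (p / (1 + p))) :=
      mul_le_mul_of_nonneg_left (by linarith) (by linarith)
    rw [codedPoint_eq_head_add_tail hp0 hp1 ω, codedPoint_eq_head_add_tail hp0 hp1 ω', h0, h1,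
      cylinderLength_zero hp1.ne]
    simp only [levelParam, Fin.val_zero, Fin.val_one, Nat.cast_zero, Nat.cast_one, zero_mul,
      add_zero, div_one, one_mul]
    linarith
  | succ n ih =>
    obtain ⟨hq0, hq1⟩ := div_one_add_mem_Ioo hp0 hp1
    have hsep := ih hq0 hq1 (fun k hk => hagree (k + 1) (by omega)) h0 h1
    rw [codedPoint_eq_head_add_tail hp0 hp1 ω, codedPoint_eq_head_add_tail hp0 hp1 ω',
      hagree 0 n.succ_pos, cylinderLength_succ hp0 hp1, levelParam_succ hp0.le]
    nlinarith

theorem inv_two_pow_le_mul_cylinderLength_mul_levelParam {p : ℝ} (hp : p ∈ Icc (1 / 2) (3 / 4))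
    (n : ℕ) : (2 ^ n)⁻¹ ≤ 8 * (n + 1) ^ 2 * (cylinderLength n p * levelParam n p) := by
  obtain ⟨hp1, hp2⟩ := hp
  have hn := n.cast_nonneg (α := ℝ)
  have hA : 0 < 1 + ((n : ℝ) - 1) * p := one_add_sub_one_mul_pos (by linarith) (by linarith) n
  have hB : 0 < 1 + n * p := by positivity
  rw [cylinderLength, levelParam, div_mul_div_comm, mul_div_assoc', le_div_iff₀ (by positivity),
    inv_mul_le_iff₀ (by positivity)]
  have hAB : (1 + ((n : ℝ) - 1) * p) * (1 + n * p) ≤ (n + 1) ^ 2 := by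
    rw [sq]
    exact mul_le_mul (by nlinarith) (by nlinarith) hB.le (by positivity)
  have hpq : 1 / 8 ≤ (1 - p) * p := by nlinarith
  have h2n : (0 : ℝ) < 2 ^ n := by positivity
  calc 2 ^ n * (1 + ((n : ℝ) - 1) * p) * (1 + n * p)
      ≤ 2 ^ n * (n + 1) ^ 2 := by rw [mul_assoc]; gcongr
    _ ≤ 2 ^ n * (8 * (n + 1) ^ 2 * ((1 - p) * p)) := by gcongr; nlinarith

section Lipschitz

variable {p p' : ℝ} (hp : p ∈ Ico (1 / 2) 1) (hp' : p' ∈ Ico (1 / 2) 1)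
include hp hp'

theorem abs_cylinderLength_sub_le (k : ℕ) :
    |cylinderLength k p - cylinderLength k p'| ≤ (2 ^ k)⁻¹ * |p - p'| := by
  obtain ⟨hp1, hp2⟩ := hp
  obtain ⟨hp1', hp2'⟩ := hp'
  cases k with
  | zero => simp [cylinderLength_zero hp2.ne, cylinderLength_zero hp2'.ne]
  | succ k =>
    have hk := k.cast_nonneg (α := ℝ)
    have hA : 0 < 1 + k * p := by positivity
    have hA' : 0 < 1 + k * p' := by positivity
    have hdiff : cylinderLength (k + 1) p - cylinderLength (k + 1) p' =
        (k + 1) * (p' - p) / (2 ^ (k + 1) * ((1 + k * p) * (1 + k * p'))) := by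
      simp only [cylinderLength, Nat.cast_succ, add_sub_cancel_right]
      field_simp
      ring
    have hprod : (k : ℝ) + 1 ≤ (1 + k * p) * (1 + k * p') := by
      have h : 1 + k / 2 ≤ 1 + k * p := by nlinarith
      have h' : 1 + k / 2 ≤ 1 + k * p' := by nlinarith
      nlinarith [mul_le_mul h h' (by positivity) hA.le]
    rw [hdiff, abs_div, abs_mul, abs_of_pos (by positivity : (0 : ℝ) < k + 1), abs_sub_comm,
      abs_of_pos (by positivity : (0 : ℝ) < 2 ^ (k + 1) * ((1 + k * p) * (1 + k * p'))),
      div_le_iff₀ (by positivity)]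
    calc ((k : ℝ) + 1) * |p - p'| ≤ |p - p'| * ((1 + k * p) * (1 + k * p')) := by
          rw [mul_comm]; exact mul_le_mul_of_nonneg_left hprod (abs_nonneg _)
      _ = _ := by field_simp

theorem abs_digitWeight_sub_le (k : ℕ) :
    |digitWeight k p - digitWeight k p'| ≤ 3 / 2 * ((1 / 2) ^ k * |p - p'|) := by
  have h := abs_cylinderLength_sub_le hp hp' k
  have h' := abs_cylinderLength_sub_le hp hp' (k + 1)
  rw [digitWeight, digitWeight, sub_sub_sub_comm]
  refine (abs_sub _ _).trans ?_
  rw [pow_succ, mul_inv] at h'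
  rw [one_div, inv_pow]
  linarith [abs_nonneg (p - p')]

theorem abs_codedPoint_sub_le (ω : ℕ → Fin 2) :
    |codedPoint ω p - codedPoint ω p'| ≤ 3 * |p - p'| := by
  have hp0 : 0 < p := by linarith [hp.1]
  have hp0' : 0 < p' := by linarith [hp'.1]
  have hgeom : HasSum (fun k => 3 / 2 * ((1 / 2) ^ k * |p - p'|)) (3 * |p - p'|) := by
    have := (hasSum_geometric_two.mul_right |p - p'|).mul_left (3 / 2)
    rwa [← mul_assoc, show (3 / 2 : ℝ) * 2 = 3 by norm_num] at this
  rw [codedPoint, codedPoint, ← (summable_digit_mul_digitWeight hp0 hp.2 ω).tsum_sub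
    (summable_digit_mul_digitWeight hp0' hp'.2 ω)]
  refine (Real.norm_eq_abs _).symm.trans_le (tsum_of_norm_bounded hgeom fun k => ?_)
  rw [Real.norm_eq_abs, ← mul_sub, abs_mul, abs_of_nonneg (Nat.cast_nonneg _)]
  exact (mul_le_of_le_one_left (abs_nonneg _) (fin_two_cast_le_one _)).trans
    (abs_digitWeight_sub_le hp hp' k)

end Lipschitz

theorem inv_two_pow_le_mul_dist_codedPoint {ω ω' : ℕ → Fin 2} {p p' : ℝ}
    (hp : p ∈ Icc (1 / 2) (3 / 4)) (hp' : p' ∈ Icc (1 / 2) (3 / 4)) {n : ℕ}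
    (hagree : ∀ k < n, ω k = ω' k) (hne : ω n ≠ ω' n) :
    (2 ^ n)⁻¹ ≤ 32 * (n + 1) ^ 2 * dist (codedPoint ω p, p) (codedPoint ω' p', p') := by
  have hp0 : 0 < p := by linarith [hp.1]
  have hp1 : p < 1 := by linarith [hp.2]
  have hIco : ∀ {x : ℝ}, x ∈ Icc (1 / 2) (3 / 4) → x ∈ Ico (1 / 2) 1 :=
    fun hx => ⟨hx.1, by linarith [hx.2]⟩
  set d := dist (codedPoint ω p, p) (codedPoint ω' p', p')
  have hd : |codedPoint ω p - codedPoint ω' p'| ≤ d ∧ |p' - p| ≤ d := by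
    simp only [d, Prod.dist_eq, Real.dist_eq, abs_sub_comm p' p]
    exact ⟨le_max_left _ _, le_max_right _ _⟩
  have hsep : cylinderLength n p * levelParam n p ≤ |codedPoint ω p - codedPoint ω' p| := by
    have : (ω n = 0 ∧ ω' n = 1) ∨ (ω n = 1 ∧ ω' n = 0) := by omega
    rcases this with ⟨h0, h1⟩ | ⟨h1, h0⟩
    · rw [abs_sub_comm]
      exact (cylinderLength_mul_levelParam_le_sub_codedPoint hp0 hp1 hagree h0 h1).trans
        (le_abs_self _)
    · exact (cylinderLength_mul_levelParam_le_sub_codedPoint hp0 hp1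
        (fun k hk => (hagree k hk).symm) h0 h1).trans (le_abs_self _)
  have hlip := abs_codedPoint_sub_le (hIco hp') (hIco hp) ω'
  have htri := abs_sub_le (codedPoint ω p) (codedPoint ω' p') (codedPoint ω' p)
  calc (2 ^ n)⁻¹ ≤ 8 * (n + 1) ^ 2 * (cylinderLength n p * levelParam n p) :=
        inv_two_pow_le_mul_cylinderLength_mul_levelParam hp n
    _ ≤ 8 * (n + 1) ^ 2 * (4 * d) :=
        mul_le_mul_of_nonneg_left (by linarith [hd.1, hd.2]) (by positivity)
    _ = 32 * (n + 1) ^ 2 * d := by ring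

noncomputable def coding (z : ℝ × ℝ) : ℝ × ℝ := (codedPoint (Real.digits z.1 2) z.2, z.2)

/-- Rational `t` are removed so that the digits of `t` are never eventually constant. -/
def codeDomain : Set (ℝ × ℝ) := (Ico 0 1 \ range ((↑) : ℚ → ℝ)) ×ˢ Icc (1 / 2) (3 / 4)

theorem exists_dist_le_mul_dist_coding_rpow {r : ℝ} (hr0 : 0 < r) (hr1 : r < 1) :
    ∃ C, ∀ z ∈ codeDomain, ∀ z' ∈ codeDomain,
      dist z z' ≤ C * dist (coding z) (coding z') ^ r := by
  obtain ⟨C, hC⟩ := exists_inv_two_pow_le_mul_rpow hr0 hr1 (K := 32) (by norm_num)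
  refine ⟨max C 1, ?_⟩
  rintro ⟨t, p⟩ ⟨⟨ht, -⟩, hp⟩ ⟨t', p'⟩ ⟨⟨ht', -⟩, hp'⟩
  dsimp only at ht hp ht' hp'
  set d := dist (coding (t, p)) (coding (t', p'))
  have hd0 : 0 ≤ d := dist_nonneg
  have hdr : d ^ r ≤ max C 1 * d ^ r :=
    le_mul_of_one_le_left (by positivity) (le_max_right _ _)
  have hpd : |p - p'| ≤ d := by
    simp only [d, Prod.dist_eq, coding, Real.dist_eq]
    exact le_max_right _ _
  have hp_le : |p - p'| ≤ min d 1 :=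
    le_min hpd (abs_sub_le_iff.2 ⟨by linarith [hp.2, hp'.1], by linarith [hp.1, hp'.2]⟩)
  have hp_le' : |p - p'| ≤ max C 1 * d ^ r :=
    calc |p - p'| ≤ min d 1 := hp_le
      _ ≤ min d 1 ^ r :=
          Real.self_le_rpow_of_le_one (le_min hd0 zero_le_one) (min_le_right _ _) hr1.le
      _ ≤ d ^ r := Real.rpow_le_rpow (le_min hd0 zero_le_one) (min_le_left _ _) hr0.le
      _ ≤ max C 1 * d ^ r := hdr
  have ht_le : |t - t'| ≤ max C 1 * d ^ r := by
    by_cases heq : Real.digits t 2 = Real.digits t' 2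
    · have : t = t' := by
        rw [← Real.ofDigits_digits one_lt_two ht, heq, Real.ofDigits_digits one_lt_two ht']
      simpa [this] using (by positivity : 0 ≤ max C 1 * d ^ r)
    · have hex := Function.ne_iff.1 heq
      classical
      have hagree (k) (hk : k < Nat.find hex) := not_not.1 (Nat.find_min hex hk)
      refine (Real.abs_sub_le_of_forall_lt_digits_eq ht ht' hagree).trans ((hC _ hd0 ?_).trans ?_)
      · exact inv_two_pow_le_mul_dist_codedPoint hp hp' hagree (Nat.find_spec hex)
      · exact mul_le_mul_of_nonneg_right (le_max_left _ _) (by positivity)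
  rw [Prod.dist_eq, Real.dist_eq, Real.dist_eq]
  exact max_le ht_le hp_le'

theorem coding_image_codeDomain_subset :
    coding '' codeDomain ⊆ {z : ℝ × ℝ | z ∈ Set.Icc (0 : ℝ) 1 ×ˢ Set.Icc (0 : ℝ) 1 ∧
      ∀ n : ℕ, g^[n] z ≠ (1 / 2, 1)} := by
  rintro _ ⟨⟨t, p⟩, ⟨⟨ht, hirr⟩, hp⟩, rfl⟩
  have hp0 : 0 < p := by linarith [hp.1]
  have hp1 : p < 1 := by linarith [hp.2]
  refine ⟨⟨⟨codedPoint_nonneg hp0 hp1 _, codedPoint_le_one hp0 hp1 _⟩, hp0.le, hp1.le⟩,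
    fun n hn => ?_⟩
  rw [coding, g_iterate_codedPoint hp0 hp1 (Real.exists_digits_eq_of_irrational ht hirr)] at hn
  exact (levelParam_lt_one hp0.le hp1 n).ne (congrArg Prod.snd hn)

end Sieving

open Sieving

/-- The set `K₂` of points of the unit square never mapped to `s₂ = (1/2, 1)` by the
iterates of the sieving map `g` has Hausdorff dimension `2`. -/
theorem sieving_nontypical_dimH_eq_two :
    dimH {z : ℝ × ℝ | z ∈ Set.Icc (0 : ℝ) 1 ×ˢ Set.Icc (0 : ℝ) 1 ∧
      ∀ n : ℕ, g^[n] z ≠ (1 / 2, 1)} = 2 := by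
  refine le_antisymm ((dimH_mono (subset_univ _)).trans_eq ?_) ?_
  · rw [Real.dimH_univ_eq_finrank, Module.finrank_prod, Module.finrank_self]
    norm_num
  refine ENNReal.le_of_forall_lt_one_mul_le fun a ha => ?_
  rcases eq_or_ne a 0 with rfl | ha0
  · simp
  lift a to ℝ≥0 using ha.ne_top
  have ha0' : 0 < a := pos_iff_ne_zero.2 (by exact_mod_cast ha0)
  obtain ⟨C, hC⟩ := exists_dist_le_mul_dist_coding_rpow (r := a) ha0' (by exact_mod_cast ha)
  calc (a : ℝ≥0∞) * 2 ≤ a * dimH codeDomain := by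
        gcongr
        exact two_le_dimH_diff_prod (countable_range _) one_pos (by norm_num)
    _ ≤ dimH (coding '' codeDomain) := le_dimH_image_of_dist_le_mul_rpow ha0' hC
    _ ≤ _ := dimH_mono coding_image_codeDomain_subset
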